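/- Let φ be a flow on a locally compact metric space and K a compact invariant set with attractor-repeller decomposition (A, R). If K is itself an attractor for φ, then A is an attractor for φ (on the whole space, not merely for the restricted flow φ|_K). -/

import Mathlib

open Set Topology

/-- The omega-limit set of a point under a flow. -/
def omegaLim {M : Type*} [MetricSpace M] (φ : M → ℝ → M) (x : M) : Set M :=
  ⋂ t ∈ Set.Ioi (0 : ℝ), closure {y | ∃ s ≥ t, φ x s = y}

/-- A set is invariant under the flow. -/
def IsInvariantSet {M : Type*} [MetricSpace M] (φ : M → ℝ → M) (S : Set M) : Prop :=
  ∀ t : ℝ, (fun y => φ y t) '' S = S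

/-- `K` is an attractor: a compact invariant set that is stable and attracting. -/
def IsAttractor {M : Type*} [MetricSpace M] (φ : M → ℝ → M) (K : Set M) : Prop :=
  IsCompact K ∧ IsInvariantSet φ K ∧
  (∀ U : Set M, IsOpen U → K ⊆ U →
    ∃ V : Set M, IsOpen V ∧ K ⊆ V ∧ ∀ x ∈ V, ∀ t ≥ (0 : ℝ), φ x t ∈ U) ∧
  (∃ U : Set M, IsOpen U ∧ K ⊆ U ∧
    ∀ x ∈ U, (omegaLim φ x).Nonempty ∧ omegaLim φ x ⊆ K)

/-- `A` is an attractor for the flow restricted to the compact invariant set `K`. -/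
def IsAttractorIn {M : Type*} [MetricSpace M] (φ : M → ℝ → M) (K A : Set M) : Prop :=
  A ⊆ K ∧ IsCompact A ∧ IsInvariantSet φ A ∧
  (∃ U : Set M, IsOpen U ∧ A ⊆ U ∧
    ∀ x ∈ K ∩ U, (omegaLim φ x).Nonempty ∧ omegaLim φ x ⊆ A) ∧
  (∀ U : Set M, IsOpen U → A ⊆ U →
    ∃ V : Set M, IsOpen V ∧ A ⊆ V ∧ ∀ x ∈ K ∩ V, ∀ t ≥ (0 : ℝ), φ x t ∈ U)

/-- `(A, R)` is an attractor-repeller decomposition of `K`. -/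
def IsARDecomposition {M : Type*} [MetricSpace M] (φ : M → ℝ → M)
    (K A R : Set M) : Prop :=
  IsAttractorIn φ K A ∧ R = {x ∈ K | omegaLim φ x ∩ A = ∅}

/-!
The core fact is that a point `y ∈ K` whose backward orbit eventually stays in a compact subset `C`
of the relative basin of `A` lies in `A`: the backward orbit clusters at some `w ∈ C`, the forward
orbit of `w` enters any neighbourhood `V` of `A`, hence so does an earlier point of the orbit of
`y`, and relative stability of `A` in `K` keeps the orbit from there on (which reaches `y`) inside
any prescribed neighbourhood of `A`. We apply it with `C = K ∩ closure W` for small `W ⊇ A`.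

Stability: if orbits starting arbitrarily close to `A` leave `W`, their first exit points cluster,
by stability of `K`, at some `z ∈ K \ W`; the exit times tend to infinity, so the backward orbit
of `z` stays in `closure W`. Attraction: for `x` close to `A` the forward orbit stays in `W`, so
every point of `ω(x)`, which lies in `K` as `K` attracts, has its whole orbit in `closure W`.
-/

open Filter

theorem IsCompact.exists_clusterPt_of_le_nhdsSet {X : Type*} [TopologicalSpace X] {K : Set X}
    (hK : IsCompact K) {l : Filter X} [hl : NeBot l] (hlK : l ≤ 𝓝ˢ K) :
    ∃ x ∈ K, ClusterPt x l := by
  by_contra! h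
  have hdisj : Disjoint (𝓝ˢ K) l :=
    hK.disjoint_nhdsSet_left.2 fun x hx => disjoint_iff.2 (not_neBot.1 (h x hx))
  exact hl.ne (disjoint_self.1 (hdisj.mono_left hlK))

theorem Continuous.exists_first_exit_time {X : Type*} [TopologicalSpace X] {c : ℝ → X}
    (hc : Continuous c) {U : Set X} (hU : IsOpen U) {t : ℝ} (ht : 0 ≤ t) (htU : c t ∉ U) :
    ∃ τ ≥ 0, c τ ∉ U ∧ ∀ s ∈ Ico 0 τ, c s ∈ U := by
  set S := Ici (0 : ℝ) ∩ c ⁻¹' Uᶜ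
  have hbdd : BddBelow S := ⟨0, fun s hs => hs.1⟩
  obtain ⟨hτ0, hτU⟩ :=
    (isClosed_Ici.inter (hU.isClosed_compl.preimage hc)).csInf_mem ⟨t, ht, htU⟩ hbdd
  exact ⟨sInf S, hτ0, hτU, fun s hs => not_not.1 fun hsU =>
    notMem_of_lt_csInf hs.2 hbdd ⟨hs.1, hsU⟩⟩

section

variable {M : Type*} [MetricSpace M] {φ : M → ℝ → M}

structure IsFlow (φ : M → ℝ → M) : Prop where
  continuous : Continuous fun p : M × ℝ => φ p.1 p.2
  zero : ∀ x, φ x 0 = x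
  add : ∀ x s t, φ (φ x s) t = φ x (s + t)

def IsStable (φ : M → ℝ → M) (S : Set M) : Prop :=
  ∀ U : Set M, IsOpen U → S ⊆ U →
    ∃ V : Set M, IsOpen V ∧ S ⊆ V ∧ ∀ x ∈ V, ∀ t ≥ (0 : ℝ), φ x t ∈ U

theorem IsFlow.continuous_flow (hφ : IsFlow φ) (t : ℝ) : Continuous fun x => φ x t :=
  hφ.continuous.comp (continuous_id.prodMk continuous_const)

theorem IsFlow.continuous_orbit (hφ : IsFlow φ) (x : M) : Continuous (φ x) :=
  hφ.continuous.comp (continuous_const.prodMk continuous_id)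

theorem IsInvariantSet.flow_mem {S : Set M} (hS : IsInvariantSet φ S) {x : M} (hx : x ∈ S)
    (t : ℝ) : φ x t ∈ S :=
  hS t ▸ mem_image_of_mem _ hx

theorem IsStable.eventually_forall_flow_mem {S U : Set M} (hS : IsStable φ S) (hU : IsOpen U)
    (hSU : S ⊆ U) : ∀ᶠ x in 𝓝ˢ S, ∀ t ≥ 0, φ x t ∈ U := by
  obtain ⟨V, hV, hSV, hVU⟩ := hS U hU hSU
  exact mem_of_superset (hV.mem_nhdsSet.2 hSV) hVU

theorem IsFlow.eventually_forall_Icc_flow_mem (hφ : IsFlow φ) {A W : Set M} (hA : IsCompact A)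
    (hAinv : IsInvariantSet φ A) (hW : IsOpen W) (hAW : A ⊆ W) (T : ℝ) :
    ∀ᶠ x in 𝓝ˢ A, ∀ t ∈ Icc 0 T, φ x t ∈ W := by
  obtain ⟨N, I, hN, -, hAN, hI, hNI⟩ := generalized_tube_lemma hA isCompact_Icc
    (hW.preimage hφ.continuous) fun p hp => hAW (hAinv.flow_mem hp.1 p.2)
  exact mem_of_superset (hN.mem_nhdsSet.2 hAN) fun x hx t ht => hNI (mk_mem_prod hx (hI ht))

theorem exists_flow_mem_of_mem_omegaLim {x z : M} {V : Set M} (hV : IsOpen V)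
    (hz : z ∈ omegaLim φ x) (hzV : z ∈ V) : ∃ t, φ x t ∈ V := by
  obtain ⟨_, hV, t, -, rfl⟩ := mem_closure_iff.1 (mem_iInter₂.1 hz 1 (mem_Ioi.2 one_pos)) V hV hzV
  exact ⟨t, hV⟩

theorem IsFlow.flow_mem_closure_of_mem_omegaLim (hφ : IsFlow φ) {x z : M} {W : Set M}
    (hW : ∀ t ≥ 0, φ x t ∈ W) (hz : z ∈ omegaLim φ x) (r : ℝ) : φ z r ∈ closure W := by
  have hzr : z ∈ closure {y | ∃ s ≥ |r| + 1, φ x s = y} :=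
    mem_iInter₂.1 hz _ (mem_Ioi.2 (by positivity))
  refine closure_mono ?_
    (image_closure_subset_closure_image (hφ.continuous_flow r) ⟨z, hzr, rfl⟩)
  rintro _ ⟨_, ⟨s, hs, rfl⟩, rfl⟩
  show φ (φ x s) r ∈ W
  rw [hφ.add]
  exact hW _ (by linarith [neg_abs_le r])

theorem IsAttractorIn.mem_of_eventually_backward_mem (hφ : IsFlow φ) {K A C : Set M}
    (hA : IsAttractorIn φ K A) (hKinv : IsInvariantSet φ K) (hC : IsCompact C)
    (hCA : ∀ x ∈ C, (omegaLim φ x).Nonempty ∧ omegaLim φ x ⊆ A) {y : M} (hy : y ∈ K)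
    (hyC : ∀ᶠ s in atTop, φ y (-s) ∈ C) : y ∈ A := by
  obtain ⟨-, -, -, -, hArel⟩ := hA
  by_contra hyA
  obtain ⟨V, hV, hAV, hVy⟩ := hArel {y}ᶜ isOpen_compl_singleton
    fun a ha hay => hyA (hay ▸ ha)
  obtain ⟨w, hwC, hw⟩ := hC.exists_mapClusterPt (tendsto_principal.2 hyC)
  obtain ⟨⟨p, hp⟩, hwA⟩ := hCA w hwC
  obtain ⟨T, hT⟩ := exists_flow_mem_of_mem_omegaLim hV hp (hAV (hwA hp))
  have hnear : ∀ᶠ u in 𝓝 w, φ u T ∈ V := (hφ.continuous_flow T).continuousAt (hV.mem_nhds hT)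
  obtain ⟨s, hs, hsT⟩ := ((hw.frequently hnear).and_eventually (eventually_ge_atTop T)).exists
  have hback : φ (φ y (-s)) T ∈ K := hKinv.flow_mem (hKinv.flow_mem hy _) _
  refine hVy _ ⟨hback, hs⟩ (s - T) (sub_nonneg.2 hsT) ?_
  rw [hφ.add, hφ.add, show -s + (T + (s - T)) = 0 by ring, hφ.zero]
  rfl

theorem IsAttractorIn.exists_isOpen_mem_of_eventually_backward_mem_closure (hφ : IsFlow φ)
    {K A U : Set M} (hA : IsAttractorIn φ K A) (hKc : IsCompact K) (hKinv : IsInvariantSet φ K)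
    (hU : IsOpen U) (hAU : A ⊆ U) :
    ∃ W, IsOpen W ∧ A ⊆ W ∧ W ⊆ U ∧
      ∀ y ∈ K, (∀ᶠ s in atTop, φ y (-s) ∈ closure W) → y ∈ A := by
  have ⟨_, hAc, _, ⟨U₀, hU₀, hAU₀, hbasin⟩, _⟩ := hA
  obtain ⟨W, hW, hAW, hWU⟩ := hAc.exists_isOpen_closure_subset
    (inter_mem (hU.mem_nhdsSet.2 hAU) (hU₀.mem_nhdsSet.2 hAU₀))
  refine ⟨W, hW, hAW, subset_closure.trans (hWU.trans inter_subset_left), fun y hy hyW => ?_⟩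
  refine hA.mem_of_eventually_backward_mem hφ hKinv (hKc.inter_right isClosed_closure)
    (fun p hp => hbasin p ⟨hp.1, (hWU hp.2).2⟩) hy ?_
  filter_upwards [hyW] with s hs using ⟨hKinv.flow_mem hy _, hs⟩

theorem IsFlow.exists_backward_orbit_mem_closure_of_not_stable (hφ : IsFlow φ) {K A W : Set M}
    (hKc : IsCompact K) (hKs : IsStable φ K) (hAK : A ⊆ K) (hAc : IsCompact A)
    (hAinv : IsInvariantSet φ A) (hW : IsOpen W) (hAW : A ⊆ W)
    (hleave : ∀ V, IsOpen V → A ⊆ V → ∃ x ∈ V, ∃ t ≥ (0 : ℝ), φ x t ∉ W) :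
    ∃ z ∈ K, z ∉ W ∧ ∀ᶠ s in atTop, φ z (-s) ∈ closure W := by
  set E := {x | ∃ t ≥ 0, φ x t ∉ W}
  set F := 𝓝ˢ A ⊓ 𝓟 E
  have hF : NeBot F := inf_principal_neBot_iff.2 fun V hV => by
    obtain ⟨V', ⟨hV', hAV'⟩, hV'V⟩ := (hasBasis_nhdsSet A).mem_iff.1 hV
    obtain ⟨x, hx, hxE⟩ := hleave V' hV' hAV'
    exact ⟨x, hV'V hx, hxE⟩
  have hE : ∀ᶠ x in F, x ∈ E := mem_inf_of_right (mem_principal_self E)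
  choose! τ hτ0 hτW hτbefore using fun x (hx : x ∈ E) =>
    (hφ.continuous_orbit x).exists_first_exit_time hW hx.choose_spec.1 hx.choose_spec.2
  have hτ : Tendsto τ F atTop := tendsto_atTop.2 fun T => by
    filter_upwards [mem_inf_of_left (hφ.eventually_forall_Icc_flow_mem hAc hAinv hW hAW T), hE]
      with x hx hxE
    by_contra! hlt
    exact hτW x hxE (hx _ ⟨hτ0 x hxE, hlt.le⟩)
  have hexit : Tendsto (fun x => φ x (τ x)) F (𝓝ˢ K) :=
    (hasBasis_nhdsSet K).tendsto_right_iff.2 fun O ⟨hO, hKO⟩ => by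
      filter_upwards [mem_inf_of_left (nhdsSet_mono hAK (hKs.eventually_forall_flow_mem hO hKO)),
        hE] with x hx hxE using hx _ (hτ0 x hxE)
  obtain ⟨z, hzK, hz⟩ := hKc.exists_clusterPt_of_le_nhdsSet hexit
  have hzW : z ∈ Wᶜ := by
    rw [← hW.isClosed_compl.closure_eq]
    exact hz.mem_closure_of_mem _ (hE.mono hτW)
  refine ⟨z, hzK, hzW, ?_⟩
  filter_upwards [eventually_gt_atTop 0] with s hs
  refine (hz.map (hφ.continuous_flow (-s)).continuousAt tendsto_map).mem_closure_of_mem _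
    (mem_map.2 (mem_map.2 ?_))
  filter_upwards [hE, hτ.eventually_gt_atTop s] with x hxE hxs
  show φ (φ x (τ x)) (-s) ∈ W
  rw [hφ.add]
  exact hτbefore x hxE _ ⟨by linarith, by linarith⟩

theorem IsAttractorIn.isStable (hφ : IsFlow φ) {K A : Set M} (hA : IsAttractorIn φ K A)
    (hKc : IsCompact K) (hKinv : IsInvariantSet φ K) (hKs : IsStable φ K) : IsStable φ A := by
  have ⟨hAK, hAc, hAinv, _, _⟩ := hA
  intro U hU hAU
  obtain ⟨W, hW, hAW, hWU, hWA⟩ :=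
    hA.exists_isOpen_mem_of_eventually_backward_mem_closure hφ hKc hKinv hU hAU
  suffices ∃ V, IsOpen V ∧ A ⊆ V ∧ ∀ x ∈ V, ∀ t ≥ (0 : ℝ), φ x t ∈ W by
    obtain ⟨V, hV, hAV, hVW⟩ := this
    exact ⟨V, hV, hAV, fun x hx t ht => hWU (hVW x hx t ht)⟩
  by_contra! hleave
  obtain ⟨z, hzK, hzW, hzback⟩ := hφ.exists_backward_orbit_mem_closure_of_not_stable hKc hKs
    hAK hAc hAinv hW hAW hleave
  exact hzW (hAW (hWA z hzK hzback))

theorem IsAttractorIn.exists_basin (hφ : IsFlow φ) {K A : Set M} (hK : IsAttractor φ K)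
    (hA : IsAttractorIn φ K A) (hAs : IsStable φ A) :
    ∃ U, IsOpen U ∧ A ⊆ U ∧ ∀ x ∈ U, (omegaLim φ x).Nonempty ∧ omegaLim φ x ⊆ A := by
  obtain ⟨hKc, hKinv, -, UK, hUK, hKUK, hUKω⟩ := hK
  obtain ⟨W, hW, hAW, -, hWA⟩ :=
    hA.exists_isOpen_mem_of_eventually_backward_mem_closure hφ hKc hKinv isOpen_univ
      (subset_univ A)
  obtain ⟨V, hV, hAV, hVW⟩ := hAs W hW hAW
  refine ⟨V ∩ UK, hV.inter hUK, subset_inter hAV (hA.1.trans hKUK), fun x ⟨hxV, hxUK⟩ =>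
    ⟨(hUKω x hxUK).1, fun z hz => ?_⟩⟩
  have hzK : z ∈ K := (hUKω x hxUK).2 hz
  exact hWA z hzK
    (Eventually.of_forall fun s => hφ.flow_mem_closure_of_mem_omegaLim (hVW x hxV) hz (-s))

end

theorem attractor_in_attractor_general
    {M : Type*} [MetricSpace M] (φ : M → ℝ → M)
    (hcont : Continuous fun p : M × ℝ => φ p.1 p.2)
    (h0 : ∀ x, φ x 0 = x)
    (hadd : ∀ x s t, φ (φ x s) t = φ x (s + t))
    (K A R : Set M)
    (hK : IsAttractor φ K)
    (hAR : IsARDecomposition φ K A R) :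
    IsAttractor φ A := by
  have hφ : IsFlow φ := ⟨hcont, h0, hadd⟩
  have hA : IsAttractorIn φ K A := hAR.1
  have ⟨hKc, hKinv, hKs, _⟩ := hK
  have ⟨_, hAc, hAinv, _, _⟩ := hA
  have hAs : IsStable φ A := hA.isStable hφ hKc hKinv hKs
  exact ⟨hAc, hAinv, hAs, hA.exists_basin hφ hK hAs⟩

/-- An attractor within an attractor is an attractor: if `K` is an attractor of
the flow and `(A, R)` is an attractor-repeller decomposition of `K`, then `A`
is an attractor for the flow on the whole space. -/
theorem attractor_in_attractor
    {M : Type*} [MetricSpace M] [LocallyCompactSpace M] (φ : M → ℝ → M)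
    (hcont : Continuous fun p : M × ℝ => φ p.1 p.2)
    (h0 : ∀ x, φ x 0 = x)
    (hadd : ∀ x s t, φ (φ x s) t = φ x (s + t))
    (K A R : Set M)
    (hK : IsAttractor φ K)
    (hAR : IsARDecomposition φ K A R) :
    IsAttractor φ A :=
  attractor_in_attractor_general φ hcont h0 hadd K A R hK hAR
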